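/- arXiv:2108.02021 — 8 statements merged into one kernel-verified Lean document; each statement's English description precedes it below -/
import Mathlib

section
/- Let G be a finite group and X a symmetric subset of G containing the identity. Then the subgroup generated by X equals X^r (the set of products of r elements of X) where r = 3⌊|G|/|X|⌋. -/
open scoped Pointwise

private lemma pow_subset_closure {G : Type*} [Group G] (X : Set G) :
    ∀ n : ℕ, X ^ n ⊆ (Subgroup.closure X : Set G) := by
  intro n
  induction n with
  | zero =>
    simp only [pow_zero]
    exact Set.one_subset.2 (Subgroup.one_mem _)
  | succ k ih =>
    rw [pow_succ]
    intro z hz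
    obtain ⟨a, ha, b, hb, rfl⟩ := hz
    exact Subgroup.mul_mem _ (ih ha) (Subgroup.subset_closure hb)

private lemma stab_pow {G : Type*} [Group G] {X : Set G} {i : ℕ}
    (h : X ^ (i + 1) = X ^ i) : ∀ j, i ≤ j → X ^ j = X ^ i := by
  intro j hj
  induction j with
  | zero =>
    have : i = 0 := Nat.le_zero.mp hj
    rw [this]
  | succ k ih =>
    rcases Nat.lt_or_ge i (k+1) with hk | hk
    · have hik : i ≤ k := by omega
      rw [pow_succ, ih hik, ← pow_succ, h]
    · have : i = k + 1 := by omega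
      rw [this]

/-- Lemma 4.5 (bounded generation): for a finite group `G` and a symmetric subset `X`
containing the identity, `⟨X⟩ = X^r` where `r = 3⌊|G|/|X|⌋`. -/
theorem stmt_0 {G : Type*} [Group G] [Finite G] (X : Set G)
    (h1 : (1 : G) ∈ X) (hsym : X⁻¹ = X) :
    (Subgroup.closure X : Set G) = X ^ (3 * (Nat.card G / Nat.card X)) := by
  set n := Nat.card G / Nat.card X with hn
  set r := 3 * n with hr
  -- Claim: there is a stabilization index i ≤ r.
  have hX0 : (0 : ℕ) < Nat.card X := by
    have : X.Nonempty := ⟨1, h1⟩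
    have : Nonempty X := Set.Nonempty.to_subtype this
    exact Nat.card_pos
  have hstab : ∃ i ≤ r, X ^ (i + 1) = X ^ i := by
    by_contra hcon
    push_neg at hcon
    -- pick witnesses a i ∈ X^(3i+1) \ X^(3i) for i ≤ n
    have hwit : ∀ i : Fin (n + 1), ∃ a : G, a ∈ X ^ (3 * (i : ℕ) + 1) ∧ a ∉ X ^ (3 * (i : ℕ)) := by
      intro i
      have hi : 3 * (i : ℕ) ≤ r := by
        have := i.2
        omega
      have hne := hcon (3 * (i : ℕ)) hi
      have hsub : X ^ (3 * (i : ℕ)) ⊆ X ^ (3 * (i : ℕ) + 1) :=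
        Set.pow_subset_pow_right h1 (Nat.le_succ _)
      rcases Set.exists_of_ssubset (ssubset_of_subset_of_ne hsub (Ne.symm hne)) with ⟨a, ha1, ha2⟩
      exact ⟨a, ha1, ha2⟩
    choose a ha1 ha2 using hwit
    -- the map (i, x) ↦ a i * x is injective
    have hinj : Function.Injective (fun p : Fin (n + 1) × X => a p.1 * (p.2 : G)) := by
      rintro ⟨i, x⟩ ⟨j, y⟩ hxy
      simp only at hxy
      by_cases hij : i = j
      · subst hij
        have : (x : G) = y := by
          exact mul_left_cancel hxy
        simp [Subtype.ext this]
      · -- WLOG i < j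
        exfalso
        rcases Nat.lt_or_ge (i : ℕ) (j : ℕ) with h' | h'
        · -- a j = a i * x * y⁻¹ ∈ X^(3i+3) ⊆ X^(3j)
          have haj : a j = a i * (x : G) * (y : G)⁻¹ := by
            rw [hxy]; group
          have hy' : (y : G)⁻¹ ∈ X := by
            have : (y : G)⁻¹ ∈ X⁻¹ := Set.inv_mem_inv.2 y.2
            rwa [hsym] at this
          have : a j ∈ X ^ (3 * (i : ℕ) + 1 + 1 + 1) := by
            rw [haj, pow_succ, pow_succ]
            exact Set.mul_mem_mul (Set.mul_mem_mul (ha1 i) x.2) hy'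
          have := Set.pow_subset_pow_right h1 (show 3 * (i : ℕ) + 1 + 1 + 1 ≤ 3 * (j : ℕ) by omega) this
          exact ha2 j this
        · have h'' : (j : ℕ) < (i : ℕ) := by
            have hne : (i : ℕ) ≠ (j : ℕ) := fun h => hij (Fin.ext h)
            omega
          have hai : a i = a j * (y : G) * (x : G)⁻¹ := by
            rw [← hxy]; group
          have hx' : (x : G)⁻¹ ∈ X := by
            have : (x : G)⁻¹ ∈ X⁻¹ := Set.inv_mem_inv.2 x.2
            rwa [hsym] at this
          have : a i ∈ X ^ (3 * (j : ℕ) + 1 + 1 + 1) := by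
            rw [hai, pow_succ, pow_succ]
            exact Set.mul_mem_mul (Set.mul_mem_mul (ha1 j) y.2) hx'
          have := Set.pow_subset_pow_right h1 (show 3 * (j : ℕ) + 1 + 1 + 1 ≤ 3 * (i : ℕ) by omega) this
          exact ha2 i this
    have hcard : Nat.card (Fin (n + 1) × X) ≤ Nat.card G :=
      Nat.card_le_card_of_injective _ hinj
    rw [Nat.card_prod, Nat.card_eq_fintype_card, Fintype.card_fin] at hcard
    have : Nat.card G < (n + 1) * Nat.card X := by
      have h2 : Nat.card G / Nat.card X < n + 1 := by omega
      exact (Nat.div_lt_iff_lt_mul hX0).1 h2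
    omega
  obtain ⟨i, hir, hstabi⟩ := hstab
  have hpows : ∀ j, i ≤ j → X ^ j = X ^ i := stab_pow hstabi
  -- X^i is a subgroup
  have hmul : X ^ i * X ^ i = X ^ i := by
    rw [← pow_add]
    exact hpows (i + i) (by omega)
  have hinv : (X ^ i)⁻¹ = X ^ i := by
    rw [← inv_pow, hsym]
  have hone : (1 : G) ∈ X ^ i := Set.one_mem_pow h1
  let K : Subgroup G :=
    { carrier := X ^ i
      mul_mem' := fun ha hb => by
        show _ ∈ X ^ i
        rw [← hmul]; exact Set.mul_mem_mul ha hb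
      one_mem' := hone
      inv_mem' := fun ha => by
        show _ ∈ X ^ i
        rw [← hinv]; exact Set.inv_mem_inv.2 ha }
  have hXK : X ⊆ (K : Set G) := by
    show X ⊆ X ^ i
    calc X = X ^ 1 := (pow_one X).symm
    _ ⊆ X ^ (i + 1) := Set.pow_subset_pow_right h1 (by omega)
    _ = X ^ i := hstabi
  have hle : (Subgroup.closure X : Set G) ⊆ X ^ i := by
    have := Subgroup.closure_le (K := K) |>.2 hXK
    exact this
  have hge : X ^ i ⊆ (Subgroup.closure X : Set G) := pow_subset_closure X i
  have hri : X ^ r = X ^ i := hpows r hir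
  rw [hri]
  exact Set.Subset.antisymm hle hge
end

section
/- Let G be a group satisfying Comm(G,G) ⊆ B·S where B = {x ∈ G : |x^G| ≤ n} and S ⊆ G is finite. Then any subgroup H ≤ G satisfies Comm(H,H) ⊆ B'·S' where B' = {x ∈ G : |x^G| ≤ n²} and S' ⊆ H with |S'| ≤ |S|. -/
open scoped Pointwise

/-- The conjugacy class `x^G` of `x`. -/
def conjClass {G : Type*} [Group G] (x : G) : Set G := {y : G | ∃ g : G, g⁻¹ * x * g = y}

/-- The set of commutators `Comm(X,Y) = {[x,y] : x ∈ X, y ∈ Y}` with `[x,y] = x⁻¹y⁻¹xy`. -/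
def commSet {G : Type*} [Group G] (X Y : Set G) : Set G :=
  {z : G | ∃ x ∈ X, ∃ y ∈ Y, z = x⁻¹ * y⁻¹ * x * y}

/-- The set of elements with at most `n` conjugates. -/
def smallClass (G : Type*) [Group G] (n : ℕ) : Set G :=
  {x : G | (conjClass x).Finite ∧ (conjClass x).ncard ≤ n}

lemma conjClass_inv {G : Type*} [Group G] (x : G) :
    conjClass x⁻¹ = (fun y : G => y⁻¹) '' conjClass x := by
  ext z
  constructor
  · rintro ⟨g, rfl⟩
    exact ⟨g⁻¹ * x * g, ⟨g, rfl⟩, by group⟩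
  · rintro ⟨w, ⟨g, rfl⟩, rfl⟩
    exact ⟨g, by group⟩

lemma conjClass_mul_subset {G : Type*} [Group G] (x y : G) :
    conjClass (x * y) ⊆ conjClass x * conjClass y := by
  rintro z ⟨g, rfl⟩
  exact ⟨g⁻¹ * x * g, ⟨g, rfl⟩, g⁻¹ * y * g, ⟨g, rfl⟩, by group⟩

lemma smallClass_mul_inv {G : Type*} [Group G] {n : ℕ} {x y : G}
    (hx : x ∈ smallClass G n) (hy : y ∈ smallClass G n) :
    x * y⁻¹ ∈ smallClass G (n ^ 2) := by
  obtain ⟨hxf, hxc⟩ := hx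
  obtain ⟨hyf, hyc⟩ := hy
  have hyif : (conjClass y⁻¹).Finite := by
    rw [conjClass_inv]; exact hyf.image _
  have hyic : (conjClass y⁻¹).ncard ≤ n := by
    rw [conjClass_inv]
    exact le_trans (Set.ncard_image_le hyf) hyc
  have hsub := conjClass_mul_subset x y⁻¹
  have hmulf : (conjClass x * conjClass y⁻¹).Finite := hxf.mul hyif
  refine ⟨hmulf.subset hsub, ?_⟩
  calc (conjClass (x * y⁻¹)).ncard ≤ (conjClass x * conjClass y⁻¹).ncard :=
        Set.ncard_le_ncard hsub hmulf
    _ ≤ (conjClass x).ncard * (conjClass y⁻¹).ncard := by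
        rw [Set.ncard, Set.ncard, Set.ncard]
        exact Set.natCard_mul_le
    _ ≤ n * n := Nat.mul_le_mul hxc hyic
    _ = n ^ 2 := (sq n).symm

/-- If `Comm(G,G) ⊆ B·S` with `B = {x : |x^G| ≤ n}` and `S` finite, then any subgroup
`H ≤ G` satisfies `Comm(H,H) ⊆ B'·S'` with `B' = {x : |x^G| ≤ n²}`, `S' ⊆ H`,
`|S'| ≤ |S|`. -/
theorem stmt_4 {G : Type*} [Group G] (n : ℕ) (S : Set G) (hSfin : S.Finite)
    (hcov : commSet (Set.univ : Set G) Set.univ ⊆ smallClass G n * S)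
    (H : Subgroup G) :
    ∃ S' : Set G, S' ⊆ (H : Set G) ∧ S'.Finite ∧ S'.ncard ≤ S.ncard ∧
      commSet (H : Set G) (H : Set G) ⊆ smallClass G (n ^ 2) * S' := by
  classical
  -- set of usable s ∈ S
  set T : Set G := {s ∈ S | ∃ c ∈ commSet (H : Set G) (H : Set G),
      ∃ b ∈ smallClass G n, c = b * s} with hT
  have hchoice : ∀ s ∈ T, ∃ c ∈ commSet (H : Set G) (H : Set G),
      ∃ b ∈ smallClass G n, c = b * s := fun s hs => hs.2
  choose! c hc b hb hcb using hchoice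
  refine ⟨c '' T, ?_, ?_, ?_, ?_⟩
  · rintro _ ⟨s, hs, rfl⟩
    obtain ⟨x, hx, y, hy, hxy⟩ := hc s hs
    rw [hxy]
    exact mul_mem (mul_mem (mul_mem (inv_mem hx) (inv_mem hy)) hx) hy
  · exact (hSfin.subset fun s hs => hs.1).image _
  · exact le_trans (Set.ncard_image_le (hSfin.subset fun s hs => hs.1))
      (Set.ncard_le_ncard (fun s hs => hs.1) hSfin)
  · intro z hz
    have hz' : z ∈ commSet (Set.univ : Set G) Set.univ := by
      obtain ⟨x, hx, y, hy, hxy⟩ := hz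
      exact ⟨x, trivial, y, trivial, hxy⟩
    obtain ⟨b', hb', s, hs, rfl⟩ := hcov hz'
    have hsT : s ∈ T := ⟨hs, b' * s, hz, b', hb', rfl⟩
    refine ⟨b' * (b s)⁻¹, smallClass_mul_inv hb' (hb s hsT), c s, ⟨s, hsT, rfl⟩, ?_⟩
    rw [hcb s hsT]
    group
end

section
/- Let Γ be a metabelian group and suppose a, b ∈ Γ are l-Engel elements. Then every x ∈ ⟨a,b⟩ is a (2l+1)-Engel element. -/
/-- The left-normed long commutator `[x, y, y, …, y]` (`y` repeated `n` times),
with the convention `[a,b] = a⁻¹b⁻¹ab`. -/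
def engel {G : Type*} [Group G] (x y : G) : ℕ → G
  | 0 => x
  | n + 1 => (engel x y n)⁻¹ * y⁻¹ * engel x y n * y

/-!
Since `Γ'` is abelian, the maps `σ g : c ↦ g⁻¹ c g` (`commutatorConj g`) are endomorphisms of
`Γ'` (written additively), and they commute: `g h` and `h g` differ by an element of `Γ'`, which
acts trivially. In this notation `[c, x, …, x] = (σ x - 1)ⁿ c`, so the Engel hypotheses say
`(σ a - 1)ˡ = (σ b - 1)ˡ = 0` in the commutative ring generated by the `σ g`. For `x ∈ ⟨a, b⟩`,
`σ x - 1` lies in the ideal generated by `σ a - 1` and `σ b - 1`, whose `2l`-th power vanishes by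
the binomial theorem. Hence `[z, x, …, x]` with `2l + 1` copies of `x`, which is `(σ x - 1)^(2l)`
applied to `[z, x] ∈ Γ'`, is trivial.
-/

open scoped commutatorElement IsMulCommutative

section Engel

variable {G : Type*} [Group G]

theorem engel_add (x y : G) (m n : ℕ) : engel x y (m + n) = engel (engel x y m) y n := by
  induction n with
  | zero => rfl
  | succ n ih => rw [← add_assoc, engel, ih, engel]

theorem engel_succ_eq_commutatorElement (x y : G) (n : ℕ) :
    engel x y (n + 1) = ⁅(engel x y n)⁻¹, y⁻¹⁆ := by
  simp [engel, commutatorElement_def]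

theorem engel_succ_mem_commutator (x y : G) (n : ℕ) : engel x y (n + 1) ∈ commutator G := by
  rw [engel_succ_eq_commutatorElement]
  exact Subgroup.commutator_mem_commutator (Subgroup.mem_top _) (Subgroup.mem_top _)

end Engel

section CommutatorConj

variable {G : Type*} [Group G]

def commutatorConj (g : G) : AddMonoid.End (Additive (commutator G)) :=
  (MulEquiv.toAdditive (MulAut.conjNormal g⁻¹)).toAddMonoidHom

theorem commutatorConj_apply (g : G) (c : Additive (commutator G)) :
    ((commutatorConj g c).toMul : G) = g⁻¹ * c.toMul * g := by
  show ((MulAut.conjNormal g⁻¹ c.toMul : commutator G) : G) = _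
  rw [MulAut.conjNormal_apply, inv_inv]

theorem addMonoidEnd_commutator_ext {f f' : AddMonoid.End (Additive (commutator G))}
    (h : ∀ c : Additive (commutator G), ((f c).toMul : G) = (f' c).toMul) : f = f' :=
  AddMonoidHom.ext fun c => Additive.toMul.injective (Subtype.ext (h c))

theorem commutatorConj_mul (g h : G) :
    commutatorConj (g * h) = commutatorConj h * commutatorConj g := by
  refine addMonoidEnd_commutator_ext fun c => ?_
  simp only [AddMonoid.End.coe_mul, Function.comp_apply, commutatorConj_apply]
  group

variable [IsMulCommutative (commutator G)]

theorem commutatorConj_eq_one_of_mem {k : G} (hk : k ∈ commutator G) : commutatorConj k = 1 := by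
  refine addMonoidEnd_commutator_ext fun c => ?_
  rw [commutatorConj_apply, mul_assoc, ← setLike_mul_comm hk c.toMul.2, inv_mul_cancel_left]
  rfl

theorem commute_commutatorConj (g h : G) : Commute (commutatorConj g) (commutatorConj h) := by
  have hgh : g * h = h * g * ⁅g⁻¹, h⁻¹⁆ := by group
  have hk : commutatorConj ⁅g⁻¹, h⁻¹⁆ = 1 := commutatorConj_eq_one_of_mem
    (Subgroup.commutator_mem_commutator (Subgroup.mem_top _) (Subgroup.mem_top _))
  calc commutatorConj g * commutatorConj h = commutatorConj (h * g) := (commutatorConj_mul h g).symm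
    _ = commutatorConj (g * h) := by rw [hgh, commutatorConj_mul (h * g), hk, one_mul]
    _ = commutatorConj h * commutatorConj g := commutatorConj_mul g h

theorem commutatorConj_sub_one_pow_apply (x : G) (c : commutator G) (n : ℕ) :
    ((((commutatorConj x - 1) ^ n) (Additive.ofMul c)).toMul : G) = engel (c : G) x n := by
  induction n with
  | zero => rfl
  | succ n ih =>
    set d := ((commutatorConj x - 1) ^ n) (Additive.ofMul c)
    rw [pow_succ', AddMonoid.End.coe_mul, Function.comp_apply]
    show ((commutatorConj x d - d).toMul : G) = _
    simp only [sub_eq_neg_add, toMul_add, toMul_neg, Subgroup.coe_mul, Subgroup.coe_inv,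
      commutatorConj_apply, ih, engel]
    group

theorem commutatorConj_sub_one_pow_eq_zero_of_engel {y : G} {m : ℕ}
    (hy : ∀ z : G, engel z y m = 1) : (commutatorConj y - 1) ^ m = 0 :=
  addMonoidEnd_commutator_ext fun c => (commutatorConj_sub_one_pow_apply y c.toMul m).trans (hy _)

theorem engel_succ_eq_one_of_commutatorConj_sub_one_pow_eq_zero {x : G} {n : ℕ}
    (hx : (commutatorConj x - 1) ^ n = 0) (z : G) : engel z x (n + 1) = 1 := by
  rw [add_comm, engel_add,
    ← commutatorConj_sub_one_pow_apply x ⟨_, engel_succ_mem_commutator z x 0⟩, hx]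
  rfl

end CommutatorConj

theorem pow_eq_zero_of_mem_span_pair {R : Type*} [CommRing R] {u v w : R} {m n k : ℕ}
    (hu : u ^ m = 0) (hv : v ^ n = 0) (hk : m + n ≤ k + 1) (hw : w ∈ Ideal.span {u, v}) :
    w ^ k = 0 := by
  obtain ⟨p, q, rfl⟩ := Ideal.mem_span_pair.mp hw
  exact (Commute.all _ _).add_pow_eq_zero_of_add_le_succ_of_pow_eq_zero
    (by rw [mul_pow, hu, mul_zero]) (by rw [mul_pow, hv, mul_zero]) hk

theorem MonoidHom.sub_one_mem_span_of_mem_closure {G R : Type*} [Group G] [CommRing R]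
    (f : G →* R) {s : Set G} {x : G} (hx : x ∈ Subgroup.closure s) :
    f x - 1 ∈ Ideal.span ((fun g => f g - 1) '' s) := by
  set I := Ideal.span ((fun g => f g - 1) '' s)
  have hle : Subgroup.closure s ≤ ((Ideal.Quotient.mk I : R →* R ⧸ I).comp f).ker := by
    refine (Subgroup.closure_le _).mpr fun g hg => ?_
    rw [SetLike.mem_coe, MonoidHom.mem_ker, MonoidHom.comp_apply, ← map_one (Ideal.Quotient.mk I)]
    exact Ideal.Quotient.eq.mpr (Ideal.subset_span ⟨g, hg, rfl⟩)
  have hxker := hle hx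
  rw [MonoidHom.mem_ker, MonoidHom.comp_apply, ← map_one (Ideal.Quotient.mk I)] at hxker
  exact Ideal.Quotient.eq.mp hxker

section CommutatorConjRing

variable (G : Type*) [Group G] [IsMulCommutative (commutator G)]

abbrev commutatorConjRing : Subring (AddMonoid.End (Additive (commutator G))) :=
  Subring.closure (Set.range commutatorConj)

instance : IsMulCommutative (commutatorConjRing G) :=
  Subring.isMulCommutative_closure <| by
    rintro _ ⟨g, rfl⟩ _ ⟨h, rfl⟩
    exact commute_commutatorConj g h

variable {G}

def commutatorConjRingHom : G →* commutatorConjRing G where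
  toFun g := ⟨commutatorConj g, Subring.subset_closure ⟨g, rfl⟩⟩
  map_one' := Subtype.ext <| commutatorConj_eq_one_of_mem (one_mem _)
  map_mul' g h := Subtype.ext <| (commutatorConj_mul g h).trans (commute_commutatorConj h g)

theorem commutatorConj_sub_one_pow_eq_zero_of_mem_closure {a b x : G} {m n k : ℕ}
    (ha : ∀ z : G, engel z a m = 1) (hb : ∀ z : G, engel z b n = 1) (hk : m + n ≤ k + 1)
    (hx : x ∈ Subgroup.closure {a, b}) : (commutatorConj x - 1) ^ k = 0 := by
  have hnil {y : G} {i : ℕ} (hy : ∀ z : G, engel z y i = 1) :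
      (commutatorConjRingHom y - 1) ^ i = 0 :=
    Subtype.ext (commutatorConj_sub_one_pow_eq_zero_of_engel hy)
  have hxI := commutatorConjRingHom.sub_one_mem_span_of_mem_closure hx
  rw [Set.image_pair] at hxI
  exact congrArg Subtype.val (pow_eq_zero_of_mem_span_pair (hnil ha) (hnil hb) hk hxI)

end CommutatorConjRing

/-- In a metabelian group, if `a` and `b` are `l`-Engel elements then every element of
`⟨a, b⟩` is a `(2l+1)`-Engel element. -/
theorem stmt_10 {Γ : Type*} [Group Γ] (hmet : derivedSeries Γ 2 = ⊥)
    (l : ℕ) (a b : Γ)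
    (ha : ∀ x : Γ, engel x a l = 1) (hb : ∀ x : Γ, engel x b l = 1) :
    ∀ x ∈ Subgroup.closure ({a, b} : Set Γ), ∀ z : Γ, engel z x (2 * l + 1) = 1 := by
  have : IsMulCommutative (commutator Γ) := by
    rwa [← Subgroup.commutator_self_eq_bot_iff, ← derivedSeries_one, ← derivedSeries_succ]
  intro x hx
  exact engel_succ_eq_one_of_commutatorConj_sub_one_pow_eq_zero
    (commutatorConj_sub_one_pow_eq_zero_of_mem_closure ha hb (by omega) hx)
end

section
/- Let A be a finite nilpotent group and let Γ be a group acting on A with kernel K such that |A| and |Γ/K| are coprime. Then [A,Γ] = [A,Γ,Γ]. -/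
/-!
A coprime action on a finite nilpotent group satisfies `A = C_A(Γ) [A, Γ]`. Writing `a = c m`
with `c` fixed and `m ∈ [A, Γ]`, the generator `a⁻¹ (g • a)` of `[A, Γ]` equals
`m⁻¹ (g • m) ∈ [A, Γ, Γ]`; the other inclusion holds because `[A, Γ]` is `Γ`-stable.

The factorisation goes by induction through `A ⧸ Z(A)`. Lifting a factorisation of `a Z(A)`
leaves an element `a'` whose commutators `a'⁻¹ (g • a')` form a 1-cocycle `Γ → Z(A)` that is
trivial on `K`. Summing it over `Γ ⧸ K` and taking the `|Γ : K|`-th root, which exists because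
`|Γ : K|` is prime to `|A|`, shows that it is a coboundary `y (g • y)⁻¹` with `y ∈ [A, Γ]`;
then `a' y` is fixed.
-/

open Subgroup

def MulAut.quotientCharacteristic {G : Type*} [Group G] (H : Subgroup G) [H.Characteristic] :
    MulAut G →* MulAut (G ⧸ H) where
  toFun e := QuotientGroup.congr H H e (characteristic_iff_map_eq.mp ‹_› e)
  map_one' := by ext q; induction q using QuotientGroup.induction_on; rfl
  map_mul' e f := by ext q; induction q using QuotientGroup.induction_on; rfl

@[simp]
theorem MulAut.quotientCharacteristic_apply_mk {G : Type*} [Group G] (H : Subgroup G)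
    [H.Characteristic] (e : MulAut G) (a : G) :
    MulAut.quotientCharacteristic H e (a : G ⧸ H) = (e a : G ⧸ H) :=
  rfl

section CoprimeAction

variable {Γ : Type*} [Group Γ]

section ActionCommutator

variable {A : Type*} [Group A] (φ : Γ →* MulAut A)

/-- `[A, Γ]`. -/
def actionCommutator : Subgroup A :=
  closure {x | ∃ a : A, ∃ g : Γ, x = a⁻¹ * φ g a}

theorem inv_mul_map_mem_actionCommutator (a : A) (g : Γ) : a⁻¹ * φ g a ∈ actionCommutator φ :=
  subset_closure ⟨a, g, rfl⟩

theorem map_mem_actionCommutator (g : Γ) {b : A} (hb : b ∈ actionCommutator φ) :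
    φ g b ∈ actionCommutator φ := by
  induction hb using closure_induction with
  | mem x hx =>
    obtain ⟨a, h, rfl⟩ := hx
    have hconj : φ (g * h * g⁻¹) (φ g a) = φ g (φ h a) := by
      simp only [map_mul, map_inv, MulAut.mul_apply, MulAut.inv_apply, MulEquiv.symm_apply_apply]
    rw [map_mul, map_inv, ← hconj]
    exact inv_mul_map_mem_actionCommutator φ _ _
  | one => simp [one_mem]
  | mul x y _ _ hx hy => simpa using mul_mem hx hy
  | inv x _ hx => simpa using inv_mem hx

theorem map_actionCommutator_of_surjective {B : Type*} [Group B] {φ' : Γ →* MulAut B}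
    (f : A →* B) (hf : Function.Surjective f) (hfφ : ∀ g a, f (φ g a) = φ' g (f a)) :
    (actionCommutator φ).map f = actionCommutator φ' := by
  rw [actionCommutator, MonoidHom.map_closure]
  congr 1
  ext x
  constructor
  · rintro ⟨_, ⟨a, g, rfl⟩, rfl⟩
    exact ⟨f a, g, by rw [map_mul, map_inv, hfφ]⟩
  · rintro ⟨b, g, rfl⟩
    obtain ⟨a, rfl⟩ := hf b
    exact ⟨a⁻¹ * φ g a, ⟨a, g, rfl⟩, by rw [map_mul, map_inv, hfφ]⟩

end ActionCommutator

theorem exists_mul_map_eq_self_of_coprime {Z : Type*} [CommGroup Z] [Finite Z]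
    (ψ : Γ →* MulAut Z) (K : Subgroup Γ) (hcop : (Nat.card Z).Coprime K.index) (ζ : Γ → Z)
    (hζ : ∀ g h, ζ (g * h) = ζ g * ψ g (ζ h)) (hζK : ∀ k ∈ K, ζ k = 1) :
    ∃ y ∈ closure (Set.range ζ), ∀ g, ζ g * ψ g y = y := by
  rcases subsingleton_or_nontrivial Z with hZ | hZ
  · exact ⟨1, one_mem _, fun _ => Subsingleton.elim _ _⟩
  have : K.FiniteIndex := ⟨fun h0 => by
    rw [h0, Nat.coprime_zero_right] at hcop
    exact (Finite.one_lt_card_iff_nontrivial.mpr hZ).ne' hcop⟩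
  have := K.fintypeQuotientOfFiniteIndex
  have hζ_coset : ∀ g₁ g₂, QuotientGroup.leftRel K g₁ g₂ → ζ g₁ = ζ g₂ := by
    intro g₁ g₂ h
    rw [QuotientGroup.leftRel_apply] at h
    rw [← mul_inv_cancel_left g₁ g₂, hζ, hζK _ h, map_one, mul_one]
  let F : Γ ⧸ K → Z := fun q => Quotient.liftOn' q ζ hζ_coset
  have hF : ∀ (g : Γ) (q : Γ ⧸ K), F (g • q) = ζ g * ψ g (F q) := by
    intro g q
    induction q using QuotientGroup.induction_on with
    | H x => exact hζ g x
  let b := ∏ q, F q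
  have hb : ∀ g, ζ g ^ K.index * ψ g b = b := by
    intro g
    calc ζ g ^ K.index * ψ g b = ∏ q, ζ g * ψ g (F q) := by
          rw [Finset.prod_mul_distrib, Finset.prod_const, Finset.card_univ, map_prod,
            K.index_eq_card, Nat.card_eq_fintype_card]
      _ = ∏ q, F (g • q) := by simp only [hF]
      _ = b := Fintype.prod_equiv (MulAction.toPerm g) _ _ fun _ => rfl
  refine ⟨(powCoprime hcop).symm b, ?_, fun g => (powCoprime hcop).injective ?_⟩
  · rw [powCoprime_symm_apply]
    refine zpow_mem (prod_mem fun q _ => ?_) _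
    induction q using QuotientGroup.induction_on with
    | H x => exact subset_closure ⟨x, rfl⟩
  · have hroot : ((powCoprime hcop).symm b) ^ K.index = b := (powCoprime hcop).apply_symm_apply b
    rw [powCoprime_apply, powCoprime_apply, mul_pow, ← map_pow, hroot, hb]

section Nilpotent

variable {A : Type*} [Group A] [Finite A] (φ : Γ →* MulAut A) {K : Subgroup Γ}

open scoped IsMulCommutative in
theorem exists_mem_actionCommutator_mul_fixed_of_mem_center (hK : K ≤ φ.ker)
    (hcop : (Nat.card A).Coprime K.index) {a : A} (ha : ∀ g, a⁻¹ * φ g a ∈ center A) :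
    ∃ y ∈ actionCommutator φ, ∀ g, φ g (a * y) = a * y := by
  let ψ := (MulAut.characteristic (center A)).comp φ
  let ζ : Γ → center A := fun g => ⟨a⁻¹ * φ g a, ha g⟩
  have hζ : ∀ g h, ζ (g * h) = ζ g * ψ g (ζ h) := fun g h => Subtype.ext <| by
    simp [ζ, ψ, MulAut.mul_apply, mul_assoc]
  have hζK : ∀ k ∈ K, ζ k = 1 := fun k hk => Subtype.ext <| by
    simp [ζ, (MonoidHom.mem_ker.mp (hK hk) : φ k = 1)]
  obtain ⟨y, hy, hfix⟩ := exists_mul_map_eq_self_of_coprime ψ K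
    (hcop.coprime_dvd_left (card_subgroup_dvd_card _)) ζ hζ hζK
  have hrange : (closure (Set.range ζ)).map (center A).subtype ≤ actionCommutator φ := by
    rw [MonoidHom.map_closure, closure_le]
    rintro _ ⟨_, ⟨g, rfl⟩, rfl⟩
    exact inv_mul_map_mem_actionCommutator φ a g
  refine ⟨y, hrange ⟨y, hy, rfl⟩, fun g => ?_⟩
  have hfix_g : a⁻¹ * φ g a * φ g y = y := congrArg Subtype.val (hfix g)
  rw [map_mul]
  conv_rhs => rw [← hfix_g]
  group

theorem exists_fixed_inv_mul_mem_actionCommutator_of_quotient_center (hK : K ≤ φ.ker)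
    (hcop : (Nat.card A).Coprime K.index) (a : A)
    (hquot : ∃ c, (∀ g, (MulAut.quotientCharacteristic (center A)).comp φ g c = c) ∧
      c⁻¹ * (a : A ⧸ center A) ∈
        actionCommutator ((MulAut.quotientCharacteristic (center A)).comp φ)) :
    ∃ c, (∀ g, φ g c = c) ∧ c⁻¹ * a ∈ actionCommutator φ := by
  obtain ⟨c', hc'_fix, hc'⟩ := hquot
  rw [← map_actionCommutator_of_surjective φ (QuotientGroup.mk' (center A))
    (QuotientGroup.mk'_surjective _) fun _ _ => rfl] at hc'
  obtain ⟨m, hm, hmc'⟩ := hc'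
  have hlift : ((a * m⁻¹ : A) : A ⧸ center A) = c' := by
    rw [QuotientGroup.mk'_apply] at hmc'
    rw [QuotientGroup.mk_mul, QuotientGroup.mk_inv, hmc']
    group
  have hcenter : ∀ g, (a * m⁻¹)⁻¹ * φ g (a * m⁻¹) ∈ center A := fun g => by
    rw [← QuotientGroup.eq, ← MulAut.quotientCharacteristic_apply_mk, hlift]
    exact (hc'_fix g).symm
  obtain ⟨y, hy, hfix⟩ := exists_mem_actionCommutator_mul_fixed_of_mem_center φ hK hcop hcenter
  refine ⟨a * m⁻¹ * y, hfix, ?_⟩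
  rw [show (a * m⁻¹ * y)⁻¹ * a = y⁻¹ * m by group]
  exact mul_mem (inv_mem hy) hm

theorem exists_fixed_inv_mul_mem_actionCommutator [Group.IsNilpotent A] (hK : K ≤ φ.ker)
    (hcop : (Nat.card A).Coprime K.index) (a : A) :
    ∃ c, (∀ g, φ g c = c) ∧ c⁻¹ * a ∈ actionCommutator φ := by
  refine Group.nilpotent_center_quotient_ind
    (P := fun G _ _ => ∀ [Finite G] (φ : Γ →* MulAut G), K ≤ φ.ker →
      (Nat.card G).Coprime K.index → ∀ a : G, ∃ c, (∀ g, φ g c = c) ∧ c⁻¹ * a ∈ actionCommutator φ)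
    A ?_ ?_ φ hK hcop a
  · intro G _ _ _ φ _ _ a
    exact ⟨a, fun g => Subsingleton.elim _ _, by simp [one_mem]⟩
  · intro G _ _ ih _ φ hK hcop a
    exact exists_fixed_inv_mul_mem_actionCommutator_of_quotient_center φ hK hcop a
      (ih _ (fun k hk => by rw [MonoidHom.mem_ker, MonoidHom.comp_apply, hK hk, map_one])
        (hcop.coprime_dvd_left (card_quotient_dvd_card _)) a)

end Nilpotent

end CoprimeAction

/-- Let `A` be a finite nilpotent group and `Γ` act on `A` with kernel `K`, with `|A|`
and `|Γ/K|` coprime.  Then `[A,Γ] = [A,Γ,Γ]`, where `[A,Γ] = ⟨a⁻¹·(g·a)⟩` and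
`[A,Γ,Γ] = [[A,Γ],Γ]`. -/
theorem stmt_11 {A Γ : Type*} [Group A] [Finite A] [Group.IsNilpotent A] [Group Γ]
    (φ : Γ →* MulAut A)
    (hcop : Nat.Coprime (Nat.card A) (Nat.card (Γ ⧸ φ.ker))) :
    Subgroup.closure {x : A | ∃ a : A, ∃ g : Γ, x = a⁻¹ * φ g a} =
      Subgroup.closure {x : A |
        ∃ b ∈ Subgroup.closure {x : A | ∃ a : A, ∃ g : Γ, x = a⁻¹ * φ g a},
          ∃ g : Γ, x = b⁻¹ * φ g b} := by
  change actionCommutator φ = closure {x | ∃ b ∈ actionCommutator φ, ∃ g : Γ, x = b⁻¹ * φ g b}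
  refine le_antisymm ((closure_le _).mpr ?_) ((closure_le _).mpr ?_)
  · rintro _ ⟨a, g, rfl⟩
    obtain ⟨c, hc, hm⟩ := exists_fixed_inv_mul_mem_actionCommutator φ le_rfl hcop a
    have hfactor : a⁻¹ * φ g a = (c⁻¹ * a)⁻¹ * φ g (c⁻¹ * a) := by
      rw [map_mul, map_inv, hc]
      group
    exact subset_closure ⟨c⁻¹ * a, hm, g, hfactor⟩
  · rintro _ ⟨b, hb, g, rfl⟩
    exact mul_mem (inv_mem hb) (map_mem_actionCommutator φ g hb)
end

section
/- Let G be a group of nilpotency class at most 3 in which for all x, y, z the identity [x,y,z] = G₄(g₄(x̄,ȳ), z̄) + G₅(g₅(x̄,z̄), ȳ) + G₆(g₆(ȳ,z̄), x̄) holds, where x̄ denotes the image in the abelianization, g₄, g₅, g₆ are bilinear maps into finite abelian groups of sizes c₄, c₅, c₆ and G₄, G₅, G₆ are bilinear into γ₃(G). Then d₂(G) ≥ (c₄c₅c₆)⁻¹. -/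
/-!
For fixed `x`, the `y` with `g₄(x̄, ȳ) = 1` form the kernel of a homomorphism into `C₄`, so they
make up at least a `1/c₄` share of `G`; for fixed `x, y`, the `z` with `g₅(x̄, z̄) = g₆(ȳ, z̄) = 1`
form the kernel of a homomorphism into `C₅ × C₆`. On all these triples every term of the
identity vanishes, so `[x, y, z] = 1`, and they make up at least a `1/(c₄c₅c₆)` share of `G³`.
-/

lemma MonoidHom.card_le_card_mul_card_ker {G C : Type*} [Group G] [Group C] [Finite C]
    (f : G →* C) : Nat.card G ≤ Nat.card C * Nat.card f.ker := by
  rw [← f.ker.card_mul_index, Subgroup.index_ker, mul_comm]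
  exact Nat.mul_le_mul_right _ f.range.card_le_card_group

lemma Nat.card_mul_le_mul_card_sigma {ι : Type*} [Finite ι] {κ : ι → Type*}
    [∀ i, Finite (κ i)] {a m : ℕ} (h : ∀ i, m ≤ a * Nat.card (κ i)) :
    Nat.card ι * m ≤ a * Nat.card (Σ i, κ i) := by
  have := Fintype.ofFinite ι
  rw [Nat.card_sigma, Finset.mul_sum, Nat.card_eq_fintype_card, ← smul_eq_mul,
    ← Finset.card_univ, ← Finset.sum_const]
  exact Finset.sum_le_sum fun i _ => h i

lemma card_pow_three_le_mul_card_ker_ker {G C D : Type*} [Group G] [Finite G]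
    [Group C] [Finite C] [Group D] [Finite D] (φ : G → G →* C) (ψ : G → G → G →* D) :
    Nat.card G ^ 3 ≤ Nat.card C * Nat.card D *
      Nat.card {t : G × G × G // φ t.1 t.2.1 = 1 ∧ ψ t.1 t.2.1 t.2.2 = 1} := by
  let e : {t : G × G × G // φ t.1 t.2.1 = 1 ∧ ψ t.1 t.2.1 t.2.2 = 1} ≃
      Σ x : G, Σ y : (φ x).ker, (ψ x y).ker :=
    { toFun t := ⟨t.1.1, ⟨t.1.2.1, t.2.1⟩, ⟨t.1.2.2, t.2.2⟩⟩
      invFun s := ⟨(s.1, s.2.1, s.2.2), s.2.1.2, s.2.2.2⟩ }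
  have hfiber (x : G) : Nat.card G * Nat.card G ≤
      Nat.card C * Nat.card D * Nat.card (Σ y : (φ x).ker, (ψ x y).ker) :=
    calc Nat.card G * Nat.card G
        ≤ Nat.card C * Nat.card (φ x).ker * Nat.card G :=
          Nat.mul_le_mul_right _ (φ x).card_le_card_mul_card_ker
      _ = Nat.card C * (Nat.card (φ x).ker * Nat.card G) := mul_assoc ..
      _ ≤ Nat.card C * (Nat.card D * Nat.card (Σ y : (φ x).ker, (ψ x y).ker)) :=
          Nat.mul_le_mul_left _ <| Nat.card_mul_le_mul_card_sigma fun y =>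
            (ψ x y).card_le_card_mul_card_ker
      _ = Nat.card C * Nat.card D * Nat.card (Σ y : (φ x).ker, (ψ x y).ker) :=
          (mul_assoc ..).symm
  calc Nat.card G ^ 3 = Nat.card G * (Nat.card G * Nat.card G) := by ring
    _ ≤ Nat.card C * Nat.card D * Nat.card (Σ x : G, Σ y : (φ x).ker, (ψ x y).ker) :=
      Nat.card_mul_le_mul_card_sigma hfiber
    _ = _ := by rw [Nat.card_congr e]

theorem stmt_12_general {G : Type*} [Group G] [Finite G]
    (C₄ C₅ C₆ : Type*) [CommGroup C₄] [Finite C₄] [CommGroup C₅] [Finite C₅]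
    [CommGroup C₆] [Finite C₆]
    (g₄ : (G ⧸ commutator G) → (G ⧸ commutator G) → C₄)
    (g₅ : (G ⧸ commutator G) → (G ⧸ commutator G) → C₅)
    (g₆ : (G ⧸ commutator G) → (G ⧸ commutator G) → C₆)
    (G₄ : C₄ → (G ⧸ commutator G) → G)
    (G₅ : C₅ → (G ⧸ commutator G) → G)
    (G₆ : C₆ → (G ⧸ commutator G) → G)
    (hg₄r : ∀ a b b', g₄ a (b * b') = g₄ a b * g₄ a b')
    (hg₅r : ∀ a b b', g₅ a (b * b') = g₅ a b * g₅ a b')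
    (hg₆r : ∀ a b b', g₆ a (b * b') = g₆ a b * g₆ a b')
    (hG₄l : ∀ u u' v, G₄ (u * u') v = G₄ u v * G₄ u' v)
    (hG₅l : ∀ u u' v, G₅ (u * u') v = G₅ u v * G₅ u' v)
    (hG₆l : ∀ u u' v, G₆ (u * u') v = G₆ u v * G₆ u' v)
    (hid : ∀ x y z : G,
      (x⁻¹ * y⁻¹ * x * y)⁻¹ * z⁻¹ * (x⁻¹ * y⁻¹ * x * y) * z =
        G₄ (g₄ (QuotientGroup.mk x) (QuotientGroup.mk y)) (QuotientGroup.mk z) *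
        G₅ (g₅ (QuotientGroup.mk x) (QuotientGroup.mk z)) (QuotientGroup.mk y) *
        G₆ (g₆ (QuotientGroup.mk y) (QuotientGroup.mk z)) (QuotientGroup.mk x)) :
    (Nat.card G) ^ 3 ≤
      Nat.card C₄ * Nat.card C₅ * Nat.card C₆ *
        Nat.card {t : G × G × G //
          (t.1⁻¹ * t.2.1⁻¹ * t.1 * t.2.1)⁻¹ * t.2.2⁻¹ *
            (t.1⁻¹ * t.2.1⁻¹ * t.1 * t.2.1) * t.2.2 = 1} := by
  let π := QuotientGroup.mk' (commutator G)
  let φ (x : G) : G →* C₄ := (MonoidHom.mk' (g₄ (π x)) (hg₄r (π x))).comp π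
  let ψ (x y : G) : G →* C₅ × C₆ :=
    ((MonoidHom.mk' (g₅ (π x)) (hg₅r (π x))).prod (MonoidHom.mk' (g₆ (π y)) (hg₆r (π y)))).comp π
  have hsolution (t : G × G × G) (ht : φ t.1 t.2.1 = 1 ∧ ψ t.1 t.2.1 t.2.2 = 1) :
      (t.1⁻¹ * t.2.1⁻¹ * t.1 * t.2.1)⁻¹ * t.2.2⁻¹ *
        (t.1⁻¹ * t.2.1⁻¹ * t.1 * t.2.1) * t.2.2 = 1 := by
    obtain ⟨h₄, h₅, h₆⟩ : g₄ t.1 t.2.1 = 1 ∧ g₅ t.1 t.2.2 = 1 ∧ g₆ t.2.1 t.2.2 = 1 :=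
      ⟨ht.1, Prod.mk_eq_one.mp ht.2⟩
    rw [hid]
    have hG₄one (v) : G₄ 1 v = 1 := map_one (MonoidHom.mk' (G₄ · v) (hG₄l · · v))
    have hG₅one (v) : G₅ 1 v = 1 := map_one (MonoidHom.mk' (G₅ · v) (hG₅l · · v))
    have hG₆one (v) : G₆ 1 v = 1 := map_one (MonoidHom.mk' (G₆ · v) (hG₆l · · v))
    rw [h₄, h₅, h₆, hG₄one, hG₅one, hG₆one, one_mul, one_mul]
  calc Nat.card G ^ 3
      ≤ Nat.card C₄ * Nat.card (C₅ × C₆) *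
          Nat.card {t : G × G × G // φ t.1 t.2.1 = 1 ∧ ψ t.1 t.2.1 t.2.2 = 1} :=
        card_pow_three_le_mul_card_ker_ker φ ψ
    _ ≤ _ := by
      rw [Nat.card_prod, ← mul_assoc]
      exact Nat.mul_le_mul_left _
        (Nat.card_le_card_of_injective _ (Subtype.impEmbedding _ _ hsolution).injective)

/-- If `G` has class at most 3 and the triple commutator (with `[x,y] = x⁻¹y⁻¹xy`)
has an expression `[x,y,z] = G₄(g₄(x̄,ȳ),z̄)·G₅(g₅(x̄,z̄),ȳ)·G₆(g₆(ȳ,z̄),x̄)` where the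
`gᵢ` are bilinear into finite abelian groups `Cᵢ` and the `Gᵢ` are bilinear into
`γ₃(G)`, then `d₂(G) ≥ (|C₄||C₅||C₆|)⁻¹`. -/
theorem stmt_12 {G : Type*} [Group G] [Finite G]
    (hcl : (⊤ : Subgroup G).lowerCentralSeries 3 = ⊥)
    (C₄ C₅ C₆ : Type*) [CommGroup C₄] [Finite C₄] [CommGroup C₅] [Finite C₅]
    [CommGroup C₆] [Finite C₆]
    (g₄ : (G ⧸ commutator G) → (G ⧸ commutator G) → C₄)
    (g₅ : (G ⧸ commutator G) → (G ⧸ commutator G) → C₅)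
    (g₆ : (G ⧸ commutator G) → (G ⧸ commutator G) → C₆)
    (G₄ : C₄ → (G ⧸ commutator G) → G)
    (G₅ : C₅ → (G ⧸ commutator G) → G)
    (G₆ : C₆ → (G ⧸ commutator G) → G)
    (hg₄l : ∀ a a' b, g₄ (a * a') b = g₄ a b * g₄ a' b)
    (hg₄r : ∀ a b b', g₄ a (b * b') = g₄ a b * g₄ a b')
    (hg₅l : ∀ a a' b, g₅ (a * a') b = g₅ a b * g₅ a' b)
    (hg₅r : ∀ a b b', g₅ a (b * b') = g₅ a b * g₅ a b')
    (hg₆l : ∀ a a' b, g₆ (a * a') b = g₆ a b * g₆ a' b)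
    (hg₆r : ∀ a b b', g₆ a (b * b') = g₆ a b * g₆ a b')
    (hG₄l : ∀ u u' v, G₄ (u * u') v = G₄ u v * G₄ u' v)
    (hG₄r : ∀ u v v', G₄ u (v * v') = G₄ u v * G₄ u v')
    (hG₅l : ∀ u u' v, G₅ (u * u') v = G₅ u v * G₅ u' v)
    (hG₅r : ∀ u v v', G₅ u (v * v') = G₅ u v * G₅ u v')
    (hG₆l : ∀ u u' v, G₆ (u * u') v = G₆ u v * G₆ u' v)
    (hG₆r : ∀ u v v', G₆ u (v * v') = G₆ u v * G₆ u v')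
    (hG₄mem : ∀ u v, G₄ u v ∈ (⊤ : Subgroup G).lowerCentralSeries 2)
    (hG₅mem : ∀ u v, G₅ u v ∈ (⊤ : Subgroup G).lowerCentralSeries 2)
    (hG₆mem : ∀ u v, G₆ u v ∈ (⊤ : Subgroup G).lowerCentralSeries 2)
    (hid : ∀ x y z : G,
      (x⁻¹ * y⁻¹ * x * y)⁻¹ * z⁻¹ * (x⁻¹ * y⁻¹ * x * y) * z =
        G₄ (g₄ (QuotientGroup.mk x) (QuotientGroup.mk y)) (QuotientGroup.mk z) *
        G₅ (g₅ (QuotientGroup.mk x) (QuotientGroup.mk z)) (QuotientGroup.mk y) *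
        G₆ (g₆ (QuotientGroup.mk y) (QuotientGroup.mk z)) (QuotientGroup.mk x)) :
    (Nat.card G) ^ 3 ≤
      Nat.card C₄ * Nat.card C₅ * Nat.card C₆ *
        Nat.card {t : G × G × G //
          (t.1⁻¹ * t.2.1⁻¹ * t.1 * t.2.1)⁻¹ * t.2.2⁻¹ *
            (t.1⁻¹ * t.2.1⁻¹ * t.1 * t.2.1) * t.2.2 = 1} :=
  stmt_12_general C₄ C₅ C₆ g₄ g₅ g₆ G₄ G₅ G₆ hg₄r hg₅r hg₆r hG₄l hG₅l hG₆l hid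
end

section
/- Let G be a finite group, A ⊴ G abelian, g ∈ G central modulo A, and suppose Comm(G,G) ⊆ B·S with B = {x : |x^G| ≤ n} and |S| = s. Then P_{a∈A}([a,g] ∈ B²) ≥ 1/s, where B² = {b₁b₂ : bᵢ ∈ B}, and consequently P_{a∈A, h∈G}([a,g,h] = 1) ≥ 1/(s·n²). -/
open scoped Pointwise

lemma conjClass_eq_orbit {G : Type*} [Group G] (z : G) :
    conjClass z = MulAction.orbit (ConjAct G) z := by
  ext y
  rw [ConjAct.mem_orbit_conjAct, isConj_iff]
  constructor
  · rintro ⟨h, rfl⟩; exact ⟨h, by group⟩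
  · rintro ⟨c, rfl⟩; exact ⟨c, by group⟩

lemma aux_inv {G : Type*} [Group G] [Finite G] {n : ℕ} {x : G}
    (hx : x ∈ smallClass G n) : x⁻¹ ∈ smallClass G n := by
  have him : conjClass x⁻¹ = (fun y : G => y⁻¹) '' conjClass x := by
    ext y
    constructor
    · rintro ⟨h, rfl⟩; exact ⟨h⁻¹ * x * h, ⟨h, rfl⟩, by group⟩
    · rintro ⟨w, ⟨h, rfl⟩, rfl⟩; exact ⟨h, by group⟩
  refine ⟨Set.toFinite _, ?_⟩
  rw [him, Set.ncard_image_of_injective _ inv_injective]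
  exact hx.2

lemma aux_sq {G : Type*} [Group G] [Finite G] {n : ℕ} {z : G}
    (hz : z ∈ smallClass G n * smallClass G n) : (conjClass z).ncard ≤ n ^ 2 := by
  obtain ⟨b₁, hb₁, b₂, hb₂, rfl⟩ := hz
  have hsub : conjClass (b₁ * b₂) ⊆ conjClass b₁ * conjClass b₂ := by
    rintro y ⟨h, rfl⟩
    exact ⟨h⁻¹ * b₁ * h, ⟨h, rfl⟩, h⁻¹ * b₂ * h, ⟨h, rfl⟩, by group⟩
  calc (conjClass (b₁ * b₂)).ncard ≤ (conjClass b₁ * conjClass b₂).ncard :=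
        Set.ncard_le_ncard hsub (Set.toFinite _)
    _ ≤ (conjClass b₁).ncard * (conjClass b₂).ncard := by
        simpa [← Nat.card_coe_set_eq] using
          Set.natCard_mul_le (s := conjClass b₁) (t := conjClass b₂)
    _ ≤ n ^ 2 := by
        rw [pow_two]; exact Nat.mul_le_mul hb₁.2 hb₂.2

lemma aux_orbit {G : Type*} [Group G] [Finite G] (z : G) :
    Nat.card G = (conjClass z).ncard * Nat.card {h : G // z⁻¹ * h⁻¹ * z * h = 1} := by
  classical
  cases nonempty_fintype G
  haveI : Fintype (ConjAct G) := ‹Fintype G›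
  haveI := Fintype.ofFinite (MulAction.orbit (ConjAct G) z)
  haveI := Fintype.ofFinite (MulAction.stabilizer (ConjAct G) z)
  have horb := MulAction.card_orbit_mul_card_stabilizer_eq_card_group (ConjAct G) z
  have h1 : (conjClass z).ncard = Fintype.card (MulAction.orbit (ConjAct G) z) := by
    rw [conjClass_eq_orbit, Set.ncard_eq_toFinset_card', Set.toFinset_card]
  have e : {h : G // z⁻¹ * h⁻¹ * z * h = 1} ≃ MulAction.stabilizer (ConjAct G) z := by
    refine Equiv.subtypeEquiv ConjAct.toConjAct.toEquiv (fun h => ?_)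
    rw [MulAction.mem_stabilizer_iff,
      show (ConjAct.toConjAct.toEquiv h : ConjAct G) = ConjAct.toConjAct h from rfl,
      ConjAct.toConjAct_smul]
    constructor
    · intro H
      have := congrArg (fun w => h * z * w * h⁻¹) H
      simpa [mul_assoc, eq_comm] using this
    · intro H
      have := congrArg (fun w => z⁻¹ * h⁻¹ * w * h) H
      simpa [mul_assoc, eq_comm] using this
  have h2 : Nat.card {h : G // z⁻¹ * h⁻¹ * z * h = 1}
      = Fintype.card (MulAction.stabilizer (ConjAct G) z) := by
    rw [Nat.card_eq_fintype_card, Fintype.card_congr e]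
  rw [Nat.card_eq_fintype_card, h1, h2, horb]
  exact Fintype.card_congr ConjAct.toConjAct.toEquiv

/-- Let `G` be finite, `A ⊴ G` abelian, `g` central mod `A`, and `Comm(G,G) ⊆ B·S`
with `B = {x : |x^G| ≤ n}` and `|S| = s`.  Then `P_{a∈A}([a,g] ∈ B²) ≥ 1/s`, and
consequently `P_{a∈A,h∈G}([a,g,h] = 1) ≥ 1/(s·n²)`. -/
theorem stmt_14 {G : Type*} [Group G] [Finite G]
    (A : Subgroup G) (hA : A.Normal)
    (habel : ∀ a ∈ A, ∀ b ∈ A, a * b = b * a)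
    (g : G) (hg : ∀ x : G, x⁻¹ * g⁻¹ * x * g ∈ A)
    (n s : ℕ) (S : Set G) (hs : S.ncard = s)
    (hcov : commSet (Set.univ : Set G) Set.univ ⊆ smallClass G n * S) :
    Nat.card A ≤
      s * Nat.card {a : A // (a : G)⁻¹ * g⁻¹ * (a : G) * g ∈ smallClass G n * smallClass G n} ∧
    Nat.card A * Nat.card G ≤
      s * n ^ 2 * Nat.card {p : A × G //
        ((p.1 : G)⁻¹ * g⁻¹ * (p.1 : G) * g)⁻¹ * p.2⁻¹ *
          ((p.1 : G)⁻¹ * g⁻¹ * (p.1 : G) * g) * p.2 = 1} := by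
  classical
  cases nonempty_fintype G
  set B := smallClass G n with hB
  let c : G → G := fun x => x⁻¹ * g⁻¹ * x * g
  have hcA : ∀ x : G, c x ∈ A := hg
  have hmulc : ∀ a b : G, a ∈ A → b ∈ A → c (a * b) = c a * c b := by
    intro a b ha hb
    have h1 : c (a * b) = b⁻¹ * c a * b * c b := by
      show (a*b)⁻¹ * g⁻¹ * (a*b) * g = b⁻¹ * (a⁻¹ * g⁻¹ * a * g) * b * (b⁻¹ * g⁻¹ * b * g)
      group
    have h2 : b⁻¹ * c a * b = c a := by
      have hcomm := habel (c a) (hcA a) b hb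
      rw [mul_assoc, hcomm, ← mul_assoc, inv_mul_cancel, one_mul]
    rw [h1, h2]
  -- choose S-components
  have hSmem : ∀ a : A, ∃ t, t ∈ S ∧ c a * t⁻¹ ∈ B := by
    intro a
    have hm : c (a : G) ∈ commSet (Set.univ : Set G) Set.univ :=
      ⟨a, trivial, g, trivial, rfl⟩
    obtain ⟨b, hb, t, ht, hbt⟩ := hcov hm
    refine ⟨t, ht, ?_⟩
    have : c (a : G) * t⁻¹ = b := by rw [← hbt]; group
    rw [this]; exact hb
  choose f hfS hfB using hSmem
  set Sfin := S.toFinset with hSfin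
  have hcardS : Sfin.card = s := by
    rw [← hs, Set.ncard_eq_toFinset_card']
  have hSne : Sfin.Nonempty := ⟨f 1, Set.mem_toFinset.mpr (hfS 1)⟩
  obtain ⟨t₀, ht₀, hmax⟩ := Finset.exists_max_image Sfin
    (fun t => (Finset.univ.filter (fun a : A => f a = t)).card) hSne
  set F := Finset.univ.filter (fun a : A => f a = t₀) with hF
  have hcount : Fintype.card A ≤ s * F.card := by
    have h1 : (Finset.univ : Finset A).card
        = ∑ t ∈ Sfin, (Finset.univ.filter (fun a : A => f a = t)).card :=
      Finset.card_eq_sum_card_fiberwise (fun a _ => Set.mem_toFinset.mpr (hfS a))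
    calc Fintype.card A = (Finset.univ : Finset A).card := (Finset.card_univ).symm
      _ = ∑ t ∈ Sfin, (Finset.univ.filter (fun a : A => f a = t)).card := h1
      _ ≤ ∑ _t ∈ Sfin, F.card := Finset.sum_le_sum (fun t ht => hmax t ht)
      _ = Sfin.card * F.card := by rw [Finset.sum_const, smul_eq_mul]
      _ = s * F.card := by rw [hcardS]
  have hFne : F.Nonempty := by
    rw [← Finset.card_pos]
    have hApos : 0 < Fintype.card A := Fintype.card_pos
    by_contra h
    push_neg at h
    have h0 : F.card = 0 := Nat.le_zero.mp h
    rw [h0, mul_zero] at hcount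
    omega
  obtain ⟨a₀, ha₀⟩ := hFne
  have hfa₀ : f a₀ = t₀ := (Finset.mem_filter.mp ha₀).2
  -- key membership
  have key : ∀ a : A, a ∈ F → ((a * a₀⁻¹ : A) : G)⁻¹ * g⁻¹ * ((a * a₀⁻¹ : A) : G) * g ∈ B * B := by
    intro a ha
    have hfa : f a = t₀ := (Finset.mem_filter.mp ha).2
    have hcoe : ((a * a₀⁻¹ : A) : G) = (a : G) * (a₀ : G)⁻¹ := by push_cast; ring_nf
    have hmem : ((a : G) * (a₀ : G)⁻¹) ∈ A := mul_mem a.2 (inv_mem a₀.2)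
    have h1 : c (a : G) = c ((a : G) * (a₀ : G)⁻¹) * c (a₀ : G) := by
      rw [← hmulc _ _ hmem a₀.2]
      congr 1
      group
    have h2 : c ((a : G) * (a₀ : G)⁻¹) = c (a : G) * (c (a₀ : G))⁻¹ := by
      rw [h1]; group
    have h3 : c (a : G) * (c (a₀ : G))⁻¹
        = (c (a : G) * t₀⁻¹) * (c (a₀ : G) * t₀⁻¹)⁻¹ := by group
    show c ((a * a₀⁻¹ : A) : G) ∈ B * B
    rw [hcoe, h2, h3]
    exact Set.mul_mem_mul (hfa ▸ hfB a) (aux_inv (hfa₀ ▸ hfB a₀))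
  set T := {a : A // (a : G)⁻¹ * g⁻¹ * (a : G) * g ∈ B * B} with hT
  have hFT : F.card ≤ Nat.card T := by
    rw [Nat.card_eq_fintype_card]
    have hinj : Function.Injective
        (fun x : {x // x ∈ F} => (⟨x.1 * a₀⁻¹, key x.1 x.2⟩ : T)) := by
      intro x y hxy
      have : (x.1 : A) * a₀⁻¹ = (y.1 : A) * a₀⁻¹ := congrArg Subtype.val hxy
      exact Subtype.ext (mul_right_cancel this)
    have := Fintype.card_le_of_injective _ hinj
    simpa [Fintype.card_coe] using this
  have part1 : Nat.card A ≤ s * Nat.card T := by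
    rw [Nat.card_eq_fintype_card]
    exact le_trans hcount (Nat.mul_le_mul_left s hFT)
  refine ⟨part1, ?_⟩
  -- Part 2
  set Q : A → G → Prop := fun a h => (c (a : G))⁻¹ * h⁻¹ * (c (a : G)) * h = 1 with hQ
  have hpairs : Nat.card {p : A × G //
      ((p.1 : G)⁻¹ * g⁻¹ * (p.1 : G) * g)⁻¹ * p.2⁻¹ *
        ((p.1 : G)⁻¹ * g⁻¹ * (p.1 : G) * g) * p.2 = 1}
      = ∑ a : A, Fintype.card {h : G // Q a h} := by
    rw [Nat.card_eq_fintype_card]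
    rw [Fintype.card_congr (Equiv.subtypeProdEquivSigmaSubtype Q)]
    rw [Fintype.card_sigma]
  set Tfin := Finset.univ.filter
    (fun a : A => (a : G)⁻¹ * g⁻¹ * (a : G) * g ∈ B * B) with hTfin
  have hTcard : Nat.card T = Tfin.card := by
    rw [Nat.card_eq_fintype_card, Fintype.card_subtype]
  have hfiber : ∀ a : A, a ∈ Tfin → Nat.card G ≤ n ^ 2 * Fintype.card {h : G // Q a h} := by
    intro a ha
    have haB : c (a : G) ∈ B * B := (Finset.mem_filter.mp ha).2
    have horb := aux_orbit (z := c (a : G))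
    have hle := aux_sq (n := n) haB
    calc Nat.card G = (conjClass (c (a : G))).ncard
          * Nat.card {h : G // (c (a : G))⁻¹ * h⁻¹ * (c (a : G)) * h = 1} := horb
      _ ≤ n ^ 2 * Nat.card {h : G // (c (a : G))⁻¹ * h⁻¹ * (c (a : G)) * h = 1} :=
          Nat.mul_le_mul_right _ hle
      _ = n ^ 2 * Fintype.card {h : G // Q a h} := by rw [Nat.card_eq_fintype_card]
  calc Nat.card A * Nat.card G ≤ (s * Nat.card T) * Nat.card G :=
        Nat.mul_le_mul_right _ part1
    _ = s * (Tfin.card * Nat.card G) := by rw [hTcard, mul_assoc]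
    _ = s * ∑ _a ∈ Tfin, Nat.card G := by rw [Finset.sum_const, smul_eq_mul]
    _ ≤ s * ∑ a ∈ Tfin, n ^ 2 * Fintype.card {h : G // Q a h} :=
        Nat.mul_le_mul_left s (Finset.sum_le_sum hfiber)
    _ = s * (n ^ 2 * ∑ a ∈ Tfin, Fintype.card {h : G // Q a h}) := by
        rw [← Finset.mul_sum]
    _ ≤ s * (n ^ 2 * ∑ a : A, Fintype.card {h : G // Q a h}) := by
        refine Nat.mul_le_mul_left s (Nat.mul_le_mul_left _ ?_)
        exact Finset.sum_le_sum_of_subset (Finset.subset_univ Tfin)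
    _ = s * n ^ 2 * Nat.card _ := by rw [hpairs, mul_assoc]
end

section
/- Let G be a finite group with normal subgroups H, K such that the set Comm(H,K) = {[h,k] : h ∈ H, k ∈ K} has size at most C. Then [H,K] is finite of C-bounded order; more precisely, writing Comm(H,K) = {[h₁,k₁],...,[h_C,k_C]}, the subgroups H₀ = ⟨h₁,...,h_C, Comm(H,K)⟩ and K₀ = ⟨k₁,...,k_C, Comm(H,K)⟩ satisfy [H₀,K₀] = [H,K]. -/
/-!
Let `L = [H,K]`. Every commutator of elements of `L` lies in `Comm(H,K)`, so Schur's theorem bounds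
`|[L,L]|`, and passing to `G/[L,L]` we may assume `L` abelian. Then `x ∈ L` commutes with
`[x,k] ∈ L`, whence `[x,k]ⁿ = [xⁿ,k] ∈ Comm(H,K)`: the abelian group `[L,K]` is generated by at
most `C` elements of order at most `C`, so `|[L,K]| ≤ C^C`. Modulo `[L,K]`, `[h,k]` commutes with
`k`, whence `[h,k]ⁿ ≡ [h,kⁿ]`, and the same count gives `|L/[L,K]| ≤ C^C`.

For the second claim, each generator `[hᵢ,kᵢ]` of `[H,K]` is a commutator of `hᵢ⁻¹ ∈ H₀` and
`kᵢ⁻¹ ∈ K₀` in Mathlib's convention `⁅a,b⁆ = a b a⁻¹ b⁻¹`.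
-/

open Subgroup
open scoped commutatorElement Pointwise

section

variable {G : Type*} [Group G]

theorem commutatorElement_pow_left {x y : G} (h : Commute x ⁅x, y⁆) (n : ℕ) :
    ⁅x ^ n, y⁆ = ⁅x, y⁆ ^ n := by
  have hconj : y * x⁻¹ * y⁻¹ = x⁻¹ * ⁅x, y⁆ := by rw [commutatorElement_def]; group
  calc ⁅x ^ n, y⁆ = x ^ n * (y * x⁻¹ * y⁻¹) ^ n := by
        rw [conj_pow, commutatorElement_def, inv_pow]; group
    _ = ⁅x, y⁆ ^ n := by
      rw [hconj, h.inv_left.mul_pow, ← mul_assoc, inv_pow, mul_inv_cancel, one_mul]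

theorem commutatorElement_pow_right {x y : G} (h : Commute ⁅x, y⁆ y) (n : ℕ) :
    ⁅x, y ^ n⁆ = ⁅x, y⁆ ^ n := by
  have hconj : x * y * x⁻¹ = ⁅x, y⁆ * y := by rw [commutatorElement_def]; group
  calc ⁅x, y ^ n⁆ = (x * y * x⁻¹) ^ n * (y ^ n)⁻¹ := by
        rw [conj_pow, commutatorElement_def]
    _ = ⁅x, y⁆ ^ n := by rw [hconj, h.mul_pow, mul_inv_cancel_right]

theorem orderOf_le_ncard_of_forall_pow_mem [Finite G] {x : G} {Y : Set G}
    (h : ∀ n : ℕ, x ^ n ∈ Y) : orderOf x ≤ Y.ncard := by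
  rw [← Nat.card_zpowers, ← Nat.card_coe_set_eq]
  refine Set.ncard_le_ncard ?_ (Set.toFinite Y)
  intro z hz
  obtain ⟨n, rfl⟩ := mem_powers_iff_mem_zpowers.mpr hz
  exact h n

theorem Subgroup.card_closure_insert_le [Finite G] {a : G} {s : Set G}
    (ha : ∀ b ∈ s, Commute a b) :
    Nat.card (closure (insert a s)) ≤ orderOf a * Nat.card (closure s) := by
  have hnorm : zpowers a ≤ normalizer (closure s : Set G) := by
    refine (zpowers_le.mpr ?_).trans (centralizer_le_normalizer _)
    rw [centralizer_closure]
    exact mem_centralizer_iff.mpr fun b hb => (ha b hb).eq.symm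
  rw [Set.insert_eq, closure_union, ← zpowers_eq_closure, ← Nat.card_zpowers]
  calc Nat.card (zpowers a ⊔ closure s : Subgroup G)
      = Nat.card ((zpowers a ⊔ closure s : Subgroup G) : Set G) := rfl
    _ = Nat.card ((zpowers a : Set G) * (closure s : Set G)) := by
      rw [coe_mul_of_left_le_normalizer_right _ _ hnorm]
    _ ≤ _ := Set.natCard_mul_le

theorem Subgroup.card_closure_le_ncard_pow [Finite G] {S Y : Set G}
    (hS : ∀ a ∈ S, ∀ b ∈ S, Commute a b) (hY : ∀ s ∈ S, ∀ n : ℕ, s ^ n ∈ Y) :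
    Nat.card (closure S) ≤ Y.ncard ^ S.ncard := by
  induction S, Set.toFinite S using Set.Finite.induction_on with
  | empty => simp
  | @insert a s has hs ih =>
    rw [Set.ncard_insert_of_notMem has hs, pow_succ']
    calc Nat.card (closure (insert a s))
        ≤ orderOf a * Nat.card (closure s) :=
          card_closure_insert_le fun b hb => hS a (s.mem_insert a) b (Set.mem_insert_of_mem a hb)
      _ ≤ Y.ncard * Y.ncard ^ s.ncard :=
          Nat.mul_le_mul (orderOf_le_ncard_of_forall_pow_mem (hY a (s.mem_insert a)))
            (ih (fun x hx y hy => hS x (Set.mem_insert_of_mem a hx) y (Set.mem_insert_of_mem a hy))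
              fun x hx => hY x (Set.mem_insert_of_mem a hx))

theorem Subgroup.card_eq_card_map_mul_card_ker {G' : Type*} [Group G'] {L : Subgroup G}
    {f : G →* G'} (hf : f.ker ≤ L) : Nat.card L = Nat.card (L.map f) * Nat.card f.ker := by
  rw [← (f.subgroupMap L).ker.card_mul_index, index_ker, Subgroup.ker_subgroupMap, mul_comm,
    MonoidHom.range_eq_top_of_surjective _ (f.subgroupMap_surjective L), card_top,
    Nat.card_congr (subgroupOfEquivOfLe hf).toEquiv]

theorem mem_commSet_iff {H K : Subgroup G} {g : G} :
    g ∈ commSet (H : Set G) K ↔ ∃ h ∈ H, ∃ k ∈ K, ⁅h, k⁆ = g := by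
  constructor <;>
  · rintro ⟨x, hx, y, hy, rfl⟩
    exact ⟨x⁻¹, inv_mem hx, y⁻¹, inv_mem hy, by simp [commutatorElement_def]⟩

theorem commutatorElement_mem_commSet {H K : Subgroup G} {h k : G} (hh : h ∈ H) (hk : k ∈ K) :
    ⁅h, k⁆ ∈ commSet (H : Set G) K :=
  mem_commSet_iff.mpr ⟨h, hh, k, hk, rfl⟩

theorem closure_commSet (H K : Subgroup G) : closure (commSet (H : Set G) K) = ⁅H, K⁆ := by
  rw [Subgroup.commutator_def]
  congr 1
  ext
  exact mem_commSet_iff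

theorem commSet_subset_commutator (H K : Subgroup G) :
    commSet (H : Set G) K ⊆ (⁅H, K⁆ : Subgroup G) :=
  closure_commSet H K ▸ subset_closure

theorem commSet_mono {H H' K K' : Subgroup G} (hH : H ≤ H') (hK : K ≤ K') :
    commSet (H : Set G) K ⊆ commSet (H' : Set G) K' := by
  rintro _ ⟨x, hx, y, hy, rfl⟩
  exact ⟨x, hH hx, y, hK hy, rfl⟩

theorem ncard_commSet_pos [Finite G] (H K : Subgroup G) : 0 < (commSet (H : Set G) K).ncard :=
  (Set.ncard_pos (Set.toFinite _)).mpr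
    ⟨1, mem_commSet_iff.mpr ⟨1, one_mem H, 1, one_mem K, commutatorElement_one_left 1⟩⟩

theorem image_commSet {G' : Type*} [Group G'] (f : G →* G') (H K : Subgroup G) :
    f '' commSet (H : Set G) K = commSet (H.map f : Set G') (K.map f) := by
  ext
  simp only [Set.mem_image, mem_commSet_iff, mem_map]
  constructor
  · rintro ⟨_, ⟨h, hh, k, hk, rfl⟩, rfl⟩
    exact ⟨f h, ⟨h, hh, rfl⟩, f k, ⟨k, hk, rfl⟩, (map_commutatorElement f h k).symm⟩
  · rintro ⟨_, ⟨h, hh, rfl⟩, _, ⟨k, hk, rfl⟩, rfl⟩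
    exact ⟨⁅h, k⁆, ⟨h, hh, k, hk, rfl⟩, map_commutatorElement f h k⟩

theorem card_commutator_self_le [Finite G] (L : Subgroup G) :
    Nat.card (⁅L, L⁆ : Subgroup G) ≤ cardCommutatorBound (commSet (L : Set G) L).ncard := by
  have hset : L.subtype '' commutatorSet L = commSet (L : Set G) L := by
    ext
    simp only [Set.mem_image, mem_commutatorSet_iff, mem_commSet_iff]
    constructor
    · rintro ⟨_, ⟨a, b, rfl⟩, rfl⟩
      exact ⟨a, a.2, b, b.2, rfl⟩
    · rintro ⟨a, ha, b, hb, rfl⟩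
      exact ⟨⁅⟨a, ha⟩, ⟨b, hb⟩⁆, ⟨_, _, rfl⟩, rfl⟩
  rw [← map_subtype_commutator, card_map_of_injective L.subtype_injective, ← hset,
    Set.ncard_image_of_injective _ L.subtype_injective, ← Nat.card_coe_set_eq]
  exact card_commutator_le_of_finite_commutatorSet L

section

variable [Finite G] {H K : Subgroup G} {C : ℕ}

theorem card_commutator_commutator_le_of_commute [H.Normal]
    (hL : ∀ a ∈ ⁅H, K⁆, ∀ b ∈ ⁅H, K⁆, Commute a b) (hC : (commSet (H : Set G) K).ncard ≤ C) :
    Nat.card (⁅⁅H, K⁆, K⁆ : Subgroup G) ≤ C ^ C := by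
  set L : Subgroup G := ⁅H, K⁆
  set X := commSet (H : Set G) K
  have hT : commSet (L : Set G) K ⊆ X := commSet_mono (commutator_le_left H K) le_rfl
  have hTL : commSet (L : Set G) K ⊆ L := hT.trans (commSet_subset_commutator H K)
  have hpow : ∀ t ∈ commSet (L : Set G) K, ∀ n : ℕ, t ^ n ∈ X := by
    intro t ht n
    obtain ⟨x, hx, k, hk, rfl⟩ := mem_commSet_iff.mp ht
    rw [← commutatorElement_pow_left (hL x hx _ (hTL ht))]
    exact commutatorElement_mem_commSet (commutator_le_left H K (pow_mem hx n)) hk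
  rw [← closure_commSet L K]
  calc _ ≤ X.ncard ^ (commSet (L : Set G) K).ncard :=
        card_closure_le_ncard_pow (fun a ha b hb => hL a (hTL ha) b (hTL hb)) hpow
    _ ≤ X.ncard ^ X.ncard := Nat.pow_le_pow_right (ncard_commSet_pos H K) (Set.ncard_le_ncard hT)
    _ ≤ C ^ C := Nat.pow_self_mono hC

theorem card_map_commutator_le_of_commute [H.Normal] [K.Normal]
    (hL : ∀ a ∈ ⁅H, K⁆, ∀ b ∈ ⁅H, K⁆, Commute a b) (hC : (commSet (H : Set G) K).ncard ≤ C) :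
    Nat.card (⁅H, K⁆.map (QuotientGroup.mk' ⁅⁅H, K⁆, K⁆)) ≤ C ^ C := by
  set π := QuotientGroup.mk' ⁅⁅H, K⁆, K⁆
  set Y := π '' commSet (H : Set G) K
  have hpow : ∀ z ∈ Y, ∀ n : ℕ, z ^ n ∈ Y := by
    rintro _ ⟨_, hz, rfl⟩ n
    obtain ⟨a, ha, b, hb, rfl⟩ := mem_commSet_iff.mp hz
    have hcomm : Commute ⁅π a, π b⁆ (π b) := by
      rw [← commutatorElement_eq_one_iff_commute, ← map_commutatorElement, ← map_commutatorElement]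
      exact (QuotientGroup.eq_one_iff _).mpr
        (commutator_mem_commutator (commSet_subset_commutator H K hz) hb)
    refine ⟨⁅a, b ^ n⁆, commutatorElement_mem_commSet ha (pow_mem hb n), ?_⟩
    rw [map_commutatorElement, map_pow, commutatorElement_pow_right hcomm, map_commutatorElement]
  have hmap : ⁅H, K⁆.map π = closure Y := by
    rw [← MonoidHom.map_closure, closure_commSet]
  rw [hmap]
  refine (card_closure_le_ncard_pow ?_ hpow).trans
    (Nat.pow_self_mono ((Set.ncard_image_le (Set.toFinite _)).trans hC))
  rintro _ ⟨a, ha, rfl⟩ _ ⟨b, hb, rfl⟩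
  exact (hL a (commSet_subset_commutator H K ha) b (commSet_subset_commutator H K hb)).map π

theorem card_commutator_le_of_commute [H.Normal] [K.Normal]
    (hL : ∀ a ∈ ⁅H, K⁆, ∀ b ∈ ⁅H, K⁆, Commute a b) (hC : (commSet (H : Set G) K).ncard ≤ C) :
    Nat.card (⁅H, K⁆ : Subgroup G) ≤ C ^ C * C ^ C := by
  have hker : (QuotientGroup.mk' ⁅⁅H, K⁆, K⁆).ker ≤ ⁅H, K⁆ := by
    rw [QuotientGroup.ker_mk']
    exact commutator_le_left _ _
  rw [card_eq_card_map_mul_card_ker hker, QuotientGroup.ker_mk']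
  exact Nat.mul_le_mul (card_map_commutator_le_of_commute hL hC)
    (card_commutator_commutator_le_of_commute hL hC)

theorem card_commutator_le [H.Normal] [K.Normal] (hC : (commSet (H : Set G) K).ncard ≤ C) :
    Nat.card (⁅H, K⁆ : Subgroup G) ≤
      C ^ C * C ^ C * (Finset.range (C + 1)).sup cardCommutatorBound := by
  set L := ⁅H, K⁆
  set π := QuotientGroup.mk' ⁅L, L⁆
  have hπ : Function.Surjective π := QuotientGroup.mk'_surjective _
  have : (H.map π).Normal := .map inferInstance π hπ
  have : (K.map π).Normal := .map inferInstance π hπ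
  have hker : π.ker ≤ L := by
    rw [QuotientGroup.ker_mk']
    exact commutator_le_self L
  have hLab : ∀ a ∈ ⁅H.map π, K.map π⁆, ∀ b ∈ ⁅H.map π, K.map π⁆, Commute a b := by
    rw [← map_commutator]
    rintro _ ⟨x, hx, rfl⟩ _ ⟨y, hy, rfl⟩
    rw [← commutatorElement_eq_one_iff_commute, ← map_commutatorElement]
    exact (QuotientGroup.eq_one_iff _).mpr (commutator_mem_commutator hx hy)
  have hCπ : (commSet (H.map π : Set (G ⧸ ⁅L, L⁆)) (K.map π)).ncard ≤ C := by
    rw [← image_commSet]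
    exact (Set.ncard_image_le (Set.toFinite _)).trans hC
  have hCL : (commSet (L : Set G) L).ncard ≤ C :=
    (Set.ncard_le_ncard (commSet_mono (commutator_le_left H K) (commutator_le_right H K))).trans hC
  rw [card_eq_card_map_mul_card_ker hker, QuotientGroup.ker_mk', map_commutator]
  exact Nat.mul_le_mul (card_commutator_le_of_commute hLab hCπ)
    ((card_commutator_self_le L).trans (Finset.le_sup (Finset.mem_range_succ_iff.mpr hCL)))

end

theorem commutator_closure_union_commSet_eq {ι : Type*} {H K : Subgroup G} [H.Normal] [K.Normal]
    {h k : ι → G} (hh : ∀ i, h i ∈ H) (hk : ∀ i, k i ∈ K)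
    (hX : commSet (H : Set G) K ⊆ Set.range fun i => (h i)⁻¹ * (k i)⁻¹ * h i * k i) :
    ⁅closure (Set.range h ∪ commSet (H : Set G) K), closure (Set.range k ∪ commSet (H : Set G) K)⁆
      = ⁅H, K⁆ := by
  apply le_antisymm
  · refine commutator_mono ((closure_le _).mpr (Set.union_subset ?_ ?_))
      ((closure_le _).mpr (Set.union_subset ?_ ?_))
    · exact Set.range_subset_iff.mpr hh
    · exact (commSet_subset_commutator H K).trans (commutator_le_left H K)
    · exact Set.range_subset_iff.mpr hk
    · exact (commSet_subset_commutator H K).trans (commutator_le_right H K)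
  · rw [← closure_commSet, closure_le]
    refine hX.trans (Set.range_subset_iff.mpr fun i => ?_)
    have hcomm : (h i)⁻¹ * (k i)⁻¹ * h i * k i = ⁅(h i)⁻¹, (k i)⁻¹⁆ := by
      simp [commutatorElement_def]
    rw [SetLike.mem_coe, hcomm]
    exact commutator_mem_commutator (inv_mem (subset_closure (Or.inl ⟨i, rfl⟩)))
      (inv_mem (subset_closure (Or.inl ⟨i, rfl⟩)))

end

/-- If `G` is finite with normal subgroups `H, K` and `|Comm(H,K)| ≤ C`, then `[H,K]`
has `C`-bounded order; more precisely, if `Comm(H,K) = {[h₁,k₁],…,[h_C,k_C]}` then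
`H₀ = ⟨h₁,…,h_C, Comm(H,K)⟩` and `K₀ = ⟨k₁,…,k_C, Comm(H,K)⟩` satisfy
`[H₀,K₀] = [H,K]`. -/
theorem stmt_15 :
    ∃ f : ℕ → ℕ, ∀ (G : Type) (_ : Group G) (_ : Finite G) (H K : Subgroup G),
      H.Normal → K.Normal → ∀ C : ℕ,
      (commSet (H : Set G) (K : Set G)).ncard ≤ C →
      Nat.card ↥(⁅H, K⁆ : Subgroup G) ≤ f C ∧
      ∀ h k : Fin C → G, (∀ i, h i ∈ H) → (∀ i, k i ∈ K) →
        commSet (H : Set G) (K : Set G) =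
          Set.range (fun i => (h i)⁻¹ * (k i)⁻¹ * h i * k i) →
        ⁅Subgroup.closure (Set.range h ∪ commSet (H : Set G) (K : Set G)),
          Subgroup.closure (Set.range k ∪ commSet (H : Set G) (K : Set G))⁆ =
          (⁅H, K⁆ : Subgroup G) := by
  refine ⟨fun C => C ^ C * C ^ C * (Finset.range (C + 1)).sup cardCommutatorBound, ?_⟩
  intro G _ _ H K _ _ C hC
  exact ⟨card_commutator_le hC,
    fun h k hh hk hX => commutator_closure_union_commSet_eq hh hk hX.subset⟩
end

section
/- Let G be a finite group such that P_{x,y,z∈G}([x,y,z]=1) ≥ ε. Then there exists z₀ ∈ G such that P_{x,y∈G, z∈G'}([x,y,zz₀] = 1) ≥ ε, and consequently P_{x,y∈G, z∈G'}([x,y,z]=1) ≥ ε. -/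
/-!
For fixed `g`, the `h ∈ H` with `g` commuting with `h z₀` form a right coset of
`H ∩ C_G(g)` (or are none), so there are at most as many as for `z₀ = 1`. Averaging over
`z₀ ∈ G`, each `z ∈ G` is hit once for every `h ∈ H` (namely by `z₀ = h⁻¹ z`), so the mean
of the shifted counts equals `|H|/|G|` times the count over all of `G`; some `z₀` is at least
as good as the mean.
-/

open Finset

theorem Nat.card_subtype_prod {α β : Type*} [Fintype α] [Finite β] (P : α × β → Prop) :
    Nat.card {t : α × β // P t} = ∑ a, Nat.card {b : β // P (a, b)} :=
  (Nat.card_congr (Equiv.subtypeProdEquivSigmaSubtype fun a b => P (a, b))).trans Nat.card_sigma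

section

variable {G : Type*} [Group G]

theorem inv_mul_inv_mul_mul_eq_one_iff_commute (a u : G) :
    a⁻¹ * u⁻¹ * a * u = 1 ↔ Commute a u := by
  rw [← Commute.inv_inv_iff, ← commutatorElement_eq_one_iff_commute, commutatorElement_def,
    inv_inv, inv_inv]

theorem card_commute_mul_right_le [Finite G] (H : Subgroup G) (g z₀ : G) :
    Nat.card {h : H // Commute g (h * z₀)} ≤ Nat.card {h : H // Commute g h} := by
  rcases isEmpty_or_nonempty {h : H // Commute g (h * z₀)} with _ | ⟨h₁, hh₁⟩
  · simp
  refine Nat.card_le_card_of_injective (fun h => ⟨h.1 * h₁⁻¹, ?_⟩) fun h h' hh' => ?_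
  · simpa [mul_assoc] using h.2.mul_right hh₁.inv_right
  · exact Subtype.ext (mul_right_cancel (congrArg Subtype.val hh'))

theorem sum_card_commute_mul_right [Fintype G] (H : Subgroup G) (g : G) :
    ∑ z₀, Nat.card {h : H // Commute g (h * z₀)} =
      Nat.card H * Nat.card {z : G // Commute g z} := by
  rw [← Nat.card_subtype_prod (fun p : G × H => Commute g (p.2 * p.1)), ← Nat.card_prod]
  exact Nat.card_congr
    { toFun := fun p => (p.1.2, ⟨p.1.2 * p.1.1, p.2⟩)
      invFun := fun q => ⟨((q.1 : G)⁻¹ * q.2, q.1), by simpa using q.2.2⟩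
      left_inv := fun p => by simp
      right_inv := fun q => by simp }

theorem exists_card_mul_sum_card_commute_le {α : Type*} [Fintype α] [Fintype G]
    (c : α → G) (H : Subgroup G) :
    ∃ z₀ : G, Nat.card H * ∑ a, Nat.card {z : G // Commute (c a) z} ≤
      Nat.card G * ∑ a, Nat.card {h : H // Commute (c a) (h * z₀)} := by
  have hsum : ∑ _z₀ : G, Nat.card H * ∑ a, Nat.card {z : G // Commute (c a) z} =
      ∑ z₀, Nat.card G * ∑ a, Nat.card {h : H // Commute (c a) (h * z₀)} := by
    rw [sum_const, card_univ, ← Nat.card_eq_fintype_card, smul_eq_mul, ← mul_sum, sum_comm]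
    simp only [sum_card_commute_mul_right, mul_sum]
  obtain ⟨z₀, -, hz₀⟩ := exists_le_of_sum_le univ_nonempty hsum.le
  exact ⟨z₀, hz₀⟩

end

theorem stmt_16_general {G : Type*} [Group G] [Finite G] (ε : ℝ)
    (hd : ε * (Nat.card G : ℝ) ^ 3 ≤
      (Nat.card {t : G × G × G //
        (t.1⁻¹ * t.2.1⁻¹ * t.1 * t.2.1)⁻¹ * t.2.2⁻¹ *
          (t.1⁻¹ * t.2.1⁻¹ * t.1 * t.2.1) * t.2.2 = 1} : ℝ)) :
    (∃ z₀ : G, ε * ((Nat.card G : ℝ) ^ 2 * (Nat.card (commutator G) : ℝ)) ≤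
      (Nat.card {t : G × G × (commutator G) //
        (t.1⁻¹ * t.2.1⁻¹ * t.1 * t.2.1)⁻¹ * ((t.2.2 : G) * z₀)⁻¹ *
          (t.1⁻¹ * t.2.1⁻¹ * t.1 * t.2.1) * ((t.2.2 : G) * z₀) = 1} : ℝ)) ∧
    ε * ((Nat.card G : ℝ) ^ 2 * (Nat.card (commutator G) : ℝ)) ≤
      (Nat.card {t : G × G × (commutator G) //
        (t.1⁻¹ * t.2.1⁻¹ * t.1 * t.2.1)⁻¹ * (t.2.2 : G)⁻¹ *
          (t.1⁻¹ * t.2.1⁻¹ * t.1 * t.2.1) * (t.2.2 : G) = 1} : ℝ) := by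
  have := Fintype.ofFinite G
  simp only [inv_mul_inv_mul_mul_eq_one_iff_commute, Nat.card_subtype_prod] at hd ⊢
  obtain ⟨z₀, hz₀⟩ := exists_card_mul_sum_card_commute_le
    (fun p : G × G => p.1⁻¹ * p.2⁻¹ * p.1 * p.2) (commutator G)
  simp only [Fintype.sum_prod_type] at hz₀
  set C := ∑ x : G, ∑ y : G, Nat.card {z : G // Commute (x⁻¹ * y⁻¹ * x * y) z}
  set N := ∑ x : G, ∑ y : G,
    Nat.card {h : commutator G // Commute (x⁻¹ * y⁻¹ * x * y) (h * z₀)}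
  have hG : (0 : ℝ) < Nat.card G := by exact_mod_cast Nat.card_pos
  have hN : ε * ((Nat.card G : ℝ) ^ 2 * Nat.card (commutator G)) ≤ N := by
    refine le_of_mul_le_mul_left ?_ hG
    calc (Nat.card G : ℝ) * (ε * ((Nat.card G : ℝ) ^ 2 * Nat.card (commutator G)))
        = Nat.card (commutator G) * (ε * (Nat.card G : ℝ) ^ 3) := by ring
      _ ≤ (Nat.card (commutator G) : ℝ) * C := by gcongr
      _ ≤ (Nat.card G : ℝ) * N := by exact_mod_cast hz₀
  refine ⟨⟨z₀, hN⟩, hN.trans ?_⟩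
  exact_mod_cast sum_le_sum fun x _ => sum_le_sum fun y _ => card_commute_mul_right_le _ _ z₀

/-- Let `G` be finite with `P_{x,y,z}([x,y,z]=1) ≥ ε`, where for each `x, y` the map
`z ↦ [x,y,z]` is a homomorphism on `G'`.  Then there is `z₀ ∈ G` with
`P_{x,y∈G, z∈G'}([x,y,zz₀]=1) ≥ ε`, and consequently
`P_{x,y∈G, z∈G'}([x,y,z]=1) ≥ ε`.  (`[a,b] = a⁻¹b⁻¹ab`.) -/
theorem stmt_16 {G : Type*} [Group G] [Finite G] (ε : ℝ)
    (hhom : ∀ x y : G, ∀ z ∈ commutator G, ∀ w ∈ commutator G,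
      (x⁻¹ * y⁻¹ * x * y)⁻¹ * (z * w)⁻¹ * (x⁻¹ * y⁻¹ * x * y) * (z * w) =
        ((x⁻¹ * y⁻¹ * x * y)⁻¹ * z⁻¹ * (x⁻¹ * y⁻¹ * x * y) * z) *
        ((x⁻¹ * y⁻¹ * x * y)⁻¹ * w⁻¹ * (x⁻¹ * y⁻¹ * x * y) * w))
    (hd : ε * (Nat.card G : ℝ) ^ 3 ≤
      (Nat.card {t : G × G × G //
        (t.1⁻¹ * t.2.1⁻¹ * t.1 * t.2.1)⁻¹ * t.2.2⁻¹ *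
          (t.1⁻¹ * t.2.1⁻¹ * t.1 * t.2.1) * t.2.2 = 1} : ℝ)) :
    (∃ z₀ : G, ε * ((Nat.card G : ℝ) ^ 2 * (Nat.card (commutator G) : ℝ)) ≤
      (Nat.card {t : G × G × (commutator G) //
        (t.1⁻¹ * t.2.1⁻¹ * t.1 * t.2.1)⁻¹ * ((t.2.2 : G) * z₀)⁻¹ *
          (t.1⁻¹ * t.2.1⁻¹ * t.1 * t.2.1) * ((t.2.2 : G) * z₀) = 1} : ℝ)) ∧
    ε * ((Nat.card G : ℝ) ^ 2 * (Nat.card (commutator G) : ℝ)) ≤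
      (Nat.card {t : G × G × (commutator G) //
        (t.1⁻¹ * t.2.1⁻¹ * t.1 * t.2.1)⁻¹ * (t.2.2 : G)⁻¹ *
          (t.1⁻¹ * t.2.1⁻¹ * t.1 * t.2.1) * (t.2.2 : G) = 1} : ℝ) :=
  stmt_16_general ε hd
end
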